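/- For the complete graph K_n with n ≥ 3, edim(K_n ⊙ K_1) = edim(K_n) = n - 1. -/

import Mathlib

open SimpleGraph

variable {V W : Type*}

/-- Distance (in `ℕ∞`) from a vertex to an edge: the minimum of the distances
to the two endpoints. -/
noncomputable def edgeDist (G : SimpleGraph V) (v : V) (e : Sym2 V) : ℕ∞ :=
  Sym2.lift ⟨fun a b => min (G.edist v a) (G.edist v b),
    fun a b => min_comm _ _⟩ e

/-- A set of vertices is an edge metric generator if every pair of distinct
edges is distinguished by some vertex of the set. -/
def IsEdgeMetricGenerator (G : SimpleGraph V) (S : Set V) : Prop :=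
  ∀ e₁ ∈ G.edgeSet, ∀ e₂ ∈ G.edgeSet, e₁ ≠ e₂ →
    ∃ w ∈ S, edgeDist G w e₁ ≠ edgeDist G w e₂

/-- The edge metric dimension: minimum cardinality of an edge metric generator. -/
noncomputable def edim (G : SimpleGraph V) : ℕ :=
  sInf {n | ∃ S : Set V, S.ncard = n ∧ IsEdgeMetricGenerator G S}


/-- The join of two graphs: disjoint union plus all edges across. -/
def joinGraph (G : SimpleGraph V) (H : SimpleGraph W) : SimpleGraph (V ⊕ W) where
  Adj x y := match x, y with
    | .inl a, .inl b => G.Adj a b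
    | .inr a, .inr b => H.Adj a b
    | .inl _, .inr _ => True
    | .inr _, .inl _ => True
  symm := by constructor; rintro (a | a) (b | b) h <;> simp_all [SimpleGraph.adj_comm]
  loopless := by
    constructor
    rintro (a | a) h
    · exact G.loopless.irrefl a h
    · exact H.loopless.irrefl a h

/-- A total dominating set: every vertex has a neighbor in the set. -/
def IsTotalDomSet (G : SimpleGraph V) (D : Set V) : Prop :=
  ∀ v : V, ∃ d ∈ D, G.Adj v d

/-- The total domination number. -/
noncomputable def totalDomNum (G : SimpleGraph V) : ℕ :=
  sInf {n | ∃ D : Set V, D.ncard = n ∧ IsTotalDomSet G D}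

/-- The class 𝒢: for every vertex `u` there is a neighbor `v`
such that `{u, v}` is a minimum total dominating set. -/
def InClassG (G : SimpleGraph V) : Prop :=
  ∀ u : V, ∃ v : V, G.Adj u v ∧ IsTotalDomSet G {u, v} ∧
    ({u, v} : Set V).ncard = totalDomNum G

/-- Lexicographic product `G[H]`. -/
def lexProd (G : SimpleGraph V) (H : SimpleGraph W) : SimpleGraph (V × W) where
  Adj x y := G.Adj x.1 y.1 ∨ (x.1 = y.1 ∧ H.Adj x.2 y.2)
  symm := by constructor; rintro ⟨g, h⟩ ⟨g', h'⟩ (hadj | ⟨rfl, hadj⟩)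
             · exact Or.inl hadj.symm
             · exact Or.inr ⟨rfl, hadj.symm⟩
  loopless := by constructor; rintro ⟨g, h⟩ (hadj | ⟨-, hadj⟩)
                 · exact G.loopless.irrefl g hadj
                 · exact H.loopless.irrefl h hadj

/-- Corona product `G ⊙ H`: vertex `(g, none)` is the vertex `g` of `G`, and
`(g, some h)` is the vertex `h` of the copy of `H` attached to `g`. -/
def corona (G : SimpleGraph V) (H : SimpleGraph W) : SimpleGraph (V × Option W) where
  Adj x y := match x, y with
    | (g, none), (g', none) => G.Adj g g'
    | (g, none), (g', some _) => g = g'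
    | (g, some _), (g', none) => g = g'
    | (g, some h), (g', some h') => g = g' ∧ H.Adj h h'
  symm := by constructor; rintro ⟨g, (_ | h)⟩ ⟨g', (_ | h')⟩ hadj <;>
             simp_all [SimpleGraph.adj_comm, eq_comm]
  loopless := by constructor; rintro ⟨g, (_ | h)⟩ hadj <;> simp_all

/-- The closed neighborhood of a vertex. -/
def closedNbhd (G : SimpleGraph V) (u : V) : Set V :=
  insert u (G.neighborSet u)

/-- `u` and `v` are false twins: equal open neighborhoods. -/
def FalseTwin (G : SimpleGraph V) (u v : V) : Prop :=
  G.neighborSet u = G.neighborSet v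

/-- `u` and `v` are true twins: equal closed neighborhoods. -/
def TrueTwin (G : SimpleGraph V) (u v : V) : Prop :=
  closedNbhd G u = closedNbhd G v

/-- The union of the closed neighborhoods of the two endpoints of an edge. -/
def edgeNbhd (G : SimpleGraph V) : Sym2 V → Set V :=
  Sym2.lift ⟨fun a b => closedNbhd G a ∪ closedNbhd G b, fun _ _ => Set.union_comm _ _⟩

/-- Two edges are twin edges: `N[u] ∪ N[v] = N[x] ∪ N[y]`. -/
def TwinEdges (G : SimpleGraph V) (e f : Sym2 V) : Prop :=
  edgeNbhd G e = edgeNbhd G f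

/-- The set of edges lying in nontrivial edge-twin classes. -/
def nontrivTwinEdges (G : SimpleGraph V) : Set (Sym2 V) :=
  {e ∈ G.edgeSet | ∃ f ∈ G.edgeSet, f ≠ e ∧ TwinEdges G e f}

/-- `q(G)`: the number of edges lying in nontrivial edge-twin classes. -/
noncomputable def qval (G : SimpleGraph V) : ℕ := (nontrivTwinEdges G).ncard

/-- `q'(G) = q(G) - m`, where `m` is the number of nontrivial edge-twin classes. -/
noncomputable def q'val (G : SimpleGraph V) : ℕ :=
  qval G - (edgeNbhd G '' nontrivTwinEdges G).ncard

/-- The set of vertices lying in nontrivial false-twin classes. -/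
def nontrivFalseTwins (G : SimpleGraph V) : Set V :=
  {v | ∃ u, u ≠ v ∧ FalseTwin G u v}

/-- The set of vertices lying in nontrivial true-twin classes. -/
def nontrivTrueTwins (G : SimpleGraph V) : Set V :=
  {v | ∃ u, u ≠ v ∧ TrueTwin G u v}

/-- `f'(G) = f(G) - k`: vertices in nontrivial false-twin classes minus the
number of such classes. -/
noncomputable def f'val (G : SimpleGraph V) : ℕ :=
  (nontrivFalseTwins G).ncard - (G.neighborSet '' nontrivFalseTwins G).ncard

/-- `t'(G) = t(G) - ℓ`: vertices in nontrivial true-twin classes minus the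
number of such classes. -/
noncomputable def t'val (G : SimpleGraph V) : ℕ :=
  (nontrivTrueTwins G).ncard - (closedNbhd G '' nontrivTrueTwins G).ncard

/-- A set of representatives for the twin deletion operation: it contains
exactly one vertex from each (false- or true-) twin equivalence class. -/
def IsTwinDeletionSet (G : SimpleGraph V) (R : Set V) : Prop :=
  ∀ v : V, ∃! r : V, r ∈ R ∧ (FalseTwin G v r ∨ TrueTwin G v r)


/-!
For any graph, all vertices but one `z` form an edge metric generator: two distinct edges `e₁ ≠ e₂`
have vertices `a ∈ e₁ \ e₂` and `b ∈ e₂ \ e₁`, one of which is not `z`, and it sees its own edge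
at distance `0` and the other one at a positive distance. In `G ⊙ K_1` the leaves over all vertices
but one suffice, because a leaf sees the edges through its neighbour at distance at most `1` and all
other edges at distance at least `2`.

Conversely, automorphisms preserve edge distances, so an edge metric generator admits no
automorphism fixing it pointwise and moving an edge. If a set misses two vertices `x, y` of `K_n`
(or two fibres of `K_n ⊙ K_1`), the transposition `(x y)` is such an automorphism.
-/

theorem Sym2.exists_mem_notMem_of_ne {α : Type*} {e e' : Sym2 α} (he : ¬ e.IsDiag)
    (hne : e ≠ e') : ∃ a ∈ e, a ∉ e' := by
  induction e using Sym2.ind with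
  | _ x y =>
  by_contra! h
  exact hne (eq_of_ne_mem (mk_isDiag_iff.not.mp he) (mem_mk_left x y) (mem_mk_right x y)
    (h x (mem_mk_left x y)) (h y (mem_mk_right x y)))

namespace SimpleGraph

variable {G : SimpleGraph V} {G' : SimpleGraph W}

theorem Hom.edist_le (f : G →g G') (u v : V) : G'.edist (f u) (f v) ≤ G.edist u v := by
  rcases eq_or_ne (G.edist u v) ⊤ with h | h
  · simp [h]
  · obtain ⟨p, hp⟩ := exists_walk_of_edist_ne_top h
    calc G'.edist (f u) (f v) ≤ (p.map f).length := (p.map f).edist_le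
      _ = G.edist u v := by rw [Walk.length_map, hp]

theorem Iso.edist_eq (σ : G ≃g G') (u v : V) : G'.edist (σ u) (σ v) = G.edist u v :=
  le_antisymm (σ.toHom.edist_le u v) <| by
    simpa using σ.symm.toHom.edist_le (σ u) (σ v)

theorem mem_of_mem_edgeSet_of_adj_imp_eq {v w : V} {e : Sym2 V} (hw : ∀ u, G.Adj w u → u = v)
    (he : e ∈ G.edgeSet) (hwe : w ∈ e) : v ∈ e := by
  obtain ⟨u, rfl⟩ := Sym2.mem_iff_exists.mp hwe
  rw [hw u he]
  exact Sym2.mem_mk_right w v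

end SimpleGraph

section EdgeDist

variable {G : SimpleGraph V}

theorem edgeDist_mk (v a b : V) : edgeDist G v s(a, b) = min (G.edist v a) (G.edist v b) := rfl

theorem edgeDist_eq_zero_iff {v : V} {e : Sym2 V} : edgeDist G v e = 0 ↔ v ∈ e := by
  induction e using Sym2.ind with
  | _ a b => simp [edgeDist_mk]

theorem edgeDist_le_one_iff {v : V} {e : Sym2 V} :
    edgeDist G v e ≤ 1 ↔ ∃ u ∈ e, G.Adj v u ∨ v = u := by
  induction e using Sym2.ind with
  | _ a b => simp [edgeDist_mk, SimpleGraph.edist_le_one_iff_adj_or_eq]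

theorem edgeDist_ne_of_mem_of_notMem {v : V} {e₁ e₂ : Sym2 V} (h₁ : v ∈ e₁) (h₂ : v ∉ e₂) :
    edgeDist G v e₁ ≠ edgeDist G v e₂ := by
  rw [edgeDist_eq_zero_iff.mpr h₁, ne_comm, Ne, edgeDist_eq_zero_iff]
  exact h₂

theorem edgeDist_ne_of_adj_imp_eq {v w : V} {e₁ e₂ : Sym2 V} (hw : ∀ u, G.Adj w u → u = v)
    (hwv : G.Adj w v) (h₁ : v ∈ e₁) (he₂ : e₂ ∈ G.edgeSet) (h₂ : v ∉ e₂) :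
    edgeDist G w e₁ ≠ edgeDist G w e₂ := by
  have near : edgeDist G w e₁ ≤ 1 := edgeDist_le_one_iff.mpr ⟨v, h₁, .inl hwv⟩
  have far : ¬ edgeDist G w e₂ ≤ 1 := by
    rw [edgeDist_le_one_iff]
    rintro ⟨u, hu, hadj | rfl⟩
    · exact h₂ (hw u hadj ▸ hu)
    · exact h₂ (SimpleGraph.mem_of_mem_edgeSet_of_adj_imp_eq hw he₂ hu)
  exact fun h => far (h ▸ near)

theorem edgeDist_map_iso {G' : SimpleGraph W} (σ : G ≃g G') (v : V) (e : Sym2 V) :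
    edgeDist G' (σ v) (e.map σ) = edgeDist G v e := by
  induction e using Sym2.ind with
  | _ a b => simp only [Sym2.map_mk, edgeDist_mk, σ.edist_eq]

end EdgeDist

theorem Set.natCard_sub_one_le_ncard_of_subsingleton_compl {α : Type*} [Finite α] {s : Set α}
    (h : sᶜ.Subsingleton) : Nat.card α - 1 ≤ s.ncard := by
  have := s.ncard_add_ncard_compl
  have := (Set.ncard_le_one (s := sᶜ)).mpr fun a ha b hb => h ha hb
  omega

section EdgeMetricGenerator

variable {G : SimpleGraph V}

theorem edim_eq_ncard {S : Set V} (hS : IsEdgeMetricGenerator G S)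
    (hmin : ∀ T, IsEdgeMetricGenerator G T → S.ncard ≤ T.ncard) : edim G = S.ncard :=
  le_antisymm (Nat.sInf_le ⟨S, rfl, hS⟩) <|
    le_csInf ⟨_, S, rfl, hS⟩ fun _ ⟨T, hT, hgen⟩ => hT ▸ hmin T hgen

theorem IsEdgeMetricGenerator.map_eq_self {S : Set V} (hS : IsEdgeMetricGenerator G S)
    (σ : G ≃g G) (hσ : ∀ w ∈ S, σ w = w) {e : Sym2 V} (he : e ∈ G.edgeSet) : e.map σ = e := by
  by_contra hne
  obtain ⟨w, hw, hd⟩ := hS _ (σ.map_mem_edgeSet_iff.mpr he) e he hne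
  have := edgeDist_map_iso σ w e
  rw [hσ w hw] at this
  exact hd this

theorem isEdgeMetricGenerator_compl_singleton (G : SimpleGraph V) (z : V) :
    IsEdgeMetricGenerator G {z}ᶜ := by
  intro e₁ he₁ e₂ he₂ hne
  obtain ⟨a, ha₁, ha₂⟩ := Sym2.exists_mem_notMem_of_ne (G.not_isDiag_of_mem_edgeSet he₁) hne
  obtain ⟨b, hb₂, hb₁⟩ := Sym2.exists_mem_notMem_of_ne (G.not_isDiag_of_mem_edgeSet he₂) hne.symm
  by_cases haz : a = z
  · have hbz : b ≠ z := by rintro rfl; exact hb₁ (haz ▸ ha₁)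
    exact ⟨b, hbz, (edgeDist_ne_of_mem_of_notMem hb₂ hb₁).symm⟩
  · exact ⟨a, haz, edgeDist_ne_of_mem_of_notMem ha₁ ha₂⟩

theorem IsEdgeMetricGenerator.subsingleton_compl_of_top {S : Set V}
    (hS : IsEdgeMetricGenerator (⊤ : SimpleGraph V) S) (h3 : 3 ≤ ENat.card V) :
    Sᶜ.Subsingleton := by
  classical
  intro x hx y hy
  by_contra hxy
  obtain ⟨z, hzx, hzy⟩ := ENat.exists_ne_ne_of_three_le h3 x y
  have hσS : ∀ w ∈ S, Equiv.swap x y w = w := fun w hw =>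
    Equiv.swap_apply_of_ne_of_ne (fun h : w = x => hx (h ▸ hw)) (fun h : w = y => hy (h ▸ hw))
  have hfix := hS.map_eq_self (Iso.completeGraph (Equiv.swap x y)) hσS
    (e := s(x, z)) (by simpa using hzx.symm)
  simp [Iso.completeGraph, Equiv.swap_apply_of_ne_of_ne hzx hzy] at hfix
  rcases hfix with h | ⟨-, h⟩
  exacts [hxy h.symm, hzx h]

theorem edim_top [Finite V] (h3 : 3 ≤ Nat.card V) :
    edim (⊤ : SimpleGraph V) = Nat.card V - 1 := by
  obtain ⟨z⟩ : Nonempty V := Nat.card_pos_iff.mp (by omega) |>.1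
  have hcard : ({z}ᶜ : Set V).ncard = Nat.card V - 1 := by
    rw [Set.ncard_compl, Set.ncard_singleton]
  rw [← hcard]
  refine edim_eq_ncard (isEdgeMetricGenerator_compl_singleton ⊤ z) fun T hT => ?_
  rw [hcard]
  exact Set.natCard_sub_one_le_ncard_of_subsingleton_compl
    (hT.subsingleton_compl_of_top (by simpa [ENat.card_eq_coe_natCard] using h3))

end EdgeMetricGenerator

section Corona

variable {V' : Type*}

def SimpleGraph.Iso.corona {G : SimpleGraph V} {G' : SimpleGraph V'} (σ : G ≃g G')
    (H : SimpleGraph W) : corona G H ≃g corona G' H where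
  toEquiv := σ.toEquiv.prodCongr (Equiv.refl _)
  map_rel_iff' := by
    rintro ⟨a, _ | c⟩ ⟨b, _ | d⟩ <;> simp [_root_.corona, σ.map_adj_iff]

theorem corona_bot_adj_some_iff (G : SimpleGraph V) (p : V) (c : W) (u : V × Option W) :
    (corona G (⊥ : SimpleGraph W)).Adj (p, some c) u ↔ u = (p, none) := by
  obtain ⟨q, _ | d⟩ := u <;> simp [corona, eq_comm]

theorem isEdgeMetricGenerator_corona_bot_leaves (G : SimpleGraph V) [Unique W] (z : V) :
    IsEdgeMetricGenerator (corona G (⊥ : SimpleGraph W))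
      ((fun p => (p, some default)) '' {z}ᶜ) := by
  set S := (fun p => ((p, some default) : V × Option W)) '' {z}ᶜ
  have resolve : ∀ e₁ e₂, e₂ ∈ (corona G ⊥).edgeSet → ∀ v : V × Option W, v ∈ e₁ → v ∉ e₂ →
      v.1 ≠ z → ∃ w ∈ S, edgeDist (corona G ⊥) w e₁ ≠ edgeDist (corona G ⊥) w e₂ := by
    rintro e₁ e₂ he₂ ⟨p, _ | c⟩ h₁ h₂ hp
    · exact ⟨(p, some default), ⟨p, hp, rfl⟩, edgeDist_ne_of_adj_imp_eq
        (fun u => (corona_bot_adj_some_iff G p _ u).mp) ((corona_bot_adj_some_iff G p _ _).mpr rfl)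
        h₁ he₂ h₂⟩
    · rw [Unique.eq_default c] at h₁ h₂
      exact ⟨_, ⟨p, hp, rfl⟩, edgeDist_ne_of_mem_of_notMem h₁ h₂⟩
  intro e₁ he₁ e₂ he₂ hne
  obtain ⟨a, ha₁, ha₂⟩ := Sym2.exists_mem_notMem_of_ne (not_isDiag_of_mem_edgeSet _ he₁) hne
  obtain ⟨b, hb₂, hb₁⟩ := Sym2.exists_mem_notMem_of_ne (not_isDiag_of_mem_edgeSet _ he₂) hne.symm
  by_cases ha : a.1 = z
  · by_cases hb : b.1 = z
    · -- `a` and `b` lie over `z`, so one is the leaf there and lies only on edges through the other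
      exfalso
      have leaf_mem (c : W) {e} : e ∈ (corona G ⊥).edgeSet → (z, some c) ∈ e → (z, none) ∈ e :=
        SimpleGraph.mem_of_mem_edgeSet_of_adj_imp_eq fun u => (corona_bot_adj_some_iff G z c u).mp
      obtain ⟨p, _ | c⟩ := a <;> obtain ⟨q, _ | d⟩ := b <;> dsimp only at ha hb <;> subst ha hb
      · exact hb₁ ha₁
      · exact ha₂ (leaf_mem d he₂ hb₂)
      · exact hb₁ (leaf_mem c he₁ ha₁)
      · exact hb₁ (Subsingleton.elim c d ▸ ha₁)
    · obtain ⟨w, hw, hd⟩ := resolve e₂ e₁ he₁ b hb₂ hb₁ hb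
      exact ⟨w, hw, hd.symm⟩
  · exact resolve e₁ e₂ he₂ a ha₁ ha₂ ha

theorem IsEdgeMetricGenerator.subsingleton_compl_image_fst_of_corona_top [Nonempty W]
    {S : Set (V × Option W)}
    (hS : IsEdgeMetricGenerator (corona (⊤ : SimpleGraph V) (⊥ : SimpleGraph W)) S) :
    (Prod.fst '' S)ᶜ.Subsingleton := by
  classical
  intro x hx y hy
  by_contra hxy
  obtain ⟨c⟩ := ‹Nonempty W›
  let σ := (Iso.completeGraph (Equiv.swap x y)).corona (⊥ : SimpleGraph W)
  have hσS : ∀ w ∈ S, σ w = w := by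
    rintro ⟨p, d⟩ hw
    have hpx : p ≠ x := fun h => hx ⟨_, hw, h⟩
    have hpy : p ≠ y := fun h => hy ⟨_, hw, h⟩
    simp [σ, SimpleGraph.Iso.corona, Iso.completeGraph, Equiv.swap_apply_of_ne_of_ne hpx hpy]
  have hfix := hS.map_eq_self σ hσS (e := s((x, none), (x, some c))) rfl
  simp [σ, SimpleGraph.Iso.corona, Iso.completeGraph] at hfix
  exact hxy hfix.symm

theorem edim_corona_top_bot [Finite V] [Nonempty V] [Unique W] :
    edim (corona (⊤ : SimpleGraph V) (⊥ : SimpleGraph W)) = Nat.card V - 1 := by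
  obtain ⟨z⟩ := ‹Nonempty V›
  have hcard :
      ((fun p => ((p, some default) : V × Option W)) '' {z}ᶜ).ncard = Nat.card V - 1 := by
    rw [Set.ncard_image_of_injective _ fun _ _ h => congrArg Prod.fst h, Set.ncard_compl,
      Set.ncard_singleton]
  rw [← hcard]
  refine edim_eq_ncard (isEdgeMetricGenerator_corona_bot_leaves ⊤ z) fun T hT => ?_
  rw [hcard]
  exact (Set.natCard_sub_one_le_ncard_of_subsingleton_compl
    hT.subsingleton_compl_image_fst_of_corona_top).trans (Set.ncard_image_le T.toFinite)

end Corona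

theorem edim_corona_complete_K1 (n : ℕ) (hn : 3 ≤ n) :
    edim (corona (⊤ : SimpleGraph (Fin n)) (⊥ : SimpleGraph (Fin 1))) = n - 1 ∧
    edim (⊤ : SimpleGraph (Fin n)) = n - 1 := by
  have : Nonempty (Fin n) := ⟨⟨0, by omega⟩⟩
  exact ⟨by simpa using edim_corona_top_bot (V := Fin n) (W := Fin 1),
    by simpa using edim_top (V := Fin n) (by simpa using hn)⟩
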